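/- arXiv:1701.00637 — 2 statements merged into one kernel-verified Lean document; each statement's English description precedes it below -/
import Mathlib

section
/- (Church-Rosser for β-equality via Takahashi translation) If M =β N, then there exists a common reduct of M and N of the form N^(l*) for some natural number l, i.e., M ↠ N^(l*) and N ↠ N^(l*). -/
inductive Lam : Type
  | var : ℕ → Lam
  | lam : Lam → Lam
  | app : Lam → Lam → Lam
  deriving DecidableEq

namespace Lam

/-- term size -/
def size : Lam → ℕ
  | var _ => 1
  | lam M => 1 + M.size
  | app M N => 1 + M.size + N.size

/-- lift (shift) free variables ≥ d by 1 -/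
def lift (d : ℕ) : Lam → Lam
  | var n => if n < d then var n else var (n+1)
  | lam M => lam (M.lift (d+1))
  | app M N => app (M.lift d) (N.lift d)

/-- capture-avoiding substitution of N for the free variable x (de Bruijn) -/
def subst : Lam → ℕ → Lam → Lam
  | var n, x, N => if n = x then N else if x < n then var (n-1) else var n
  | lam M, x, N => lam (M.subst (x+1) (N.lift 0))
  | app M P, x, N => app (M.subst x N) (P.subst x N)

/-- number of free occurrences of the variable x -/
def count : Lam → ℕ → ℕ
  | var n, x => if n = x then 1 else 0
  | lam M, x => M.count (x+1)
  | app M N, x => M.count x + N.count x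

/-- one-step β-reduction -/
inductive Step : Lam → Lam → Prop
  | beta (M N : Lam) : Step (app (lam M) N) (M.subst 0 N)
  | appL {M M' : Lam} (N : Lam) : Step M M' → Step (app M N) (app M' N)
  | appR (M : Lam) {N N' : Lam} : Step N N' → Step (app M N) (app M N')
  | abs {M M' : Lam} : Step M M' → Step (lam M) (lam M')

/-- many-step β-reduction (reflexive-transitive closure) -/
def Red : Lam → Lam → Prop := Relation.ReflTransGen Step

/-- n-step β-reduction -/
def Steps : ℕ → Lam → Lam → Prop
  | 0, M, N => M = N
  | n+1, M, N => ∃ P, Step M P ∧ Steps n P N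

/-- Takahashi translation (Gross-Knuth complete development) -/
def star : Lam → Lam
  | var n => var n
  | lam M => lam (star M)
  | app (lam M) N => (star M).subst 0 (star N)
  | app (var n) N => app (var n) (star N)
  | app (app M₁ M₂) N => app (star (app M₁ M₂)) (star N)

/-- iterated Takahashi translation M^(n*) -/
def iterStar (n : ℕ) (M : Lam) : Lam := star^[n] M

end Lam

/-!
Takahashi's method. Parallel reduction `⇒` has the triangle property `M ⇒ N → N ⇒ M*`,
because `M*` contracts every redex of `M`; in particular `*` is monotone for `⇒`. Hence a
reduction `M ↠ N` of length `k` gives `N ↠ M^(k*)`: the iterates of `*` are cofinal among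
the reducts of `M`. This yields confluence, so β-equal terms `M`, `N` have a common reduct
`P`, and cofinality applied to `N ↠ P` gives `P ↠ N^(l*)`.
-/

namespace Lam

theorem lift_lift_of_le (M : Lam) {i j : ℕ} (h : i ≤ j) :
    (M.lift j).lift i = (M.lift i).lift (j + 1) := by
  induction M generalizing i j with
  | var n => simp only [lift]; split_ifs <;> simp only [lift] <;> split_ifs <;> first | rfl | omega
  | lam M ih => simp only [lift, ih (Nat.succ_le_succ h)]
  | app M N ihM ihN => simp only [lift, ihM h, ihN h]

theorem lift_subst_of_le (M N : Lam) {d x : ℕ} (h : d ≤ x) :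
    (M.subst x N).lift d = (M.lift d).subst (x + 1) (N.lift d) := by
  induction M generalizing N d x with
  | var n =>
    simp only [subst, lift]
    split_ifs <;> simp only [subst, lift] <;> split_ifs <;> first | rfl | omega | (congr 1; omega)
  | lam M ih =>
    simp only [subst, lift, ih _ (Nat.succ_le_succ h), lift_lift_of_le N (Nat.zero_le d)]
  | app M P ihM ihP => simp only [subst, lift, ihM N h, ihP N h]

theorem lift_subst_of_ge (M N : Lam) {d x : ℕ} (h : x ≤ d) :
    (M.subst x N).lift d = (M.lift (d + 1)).subst x (N.lift d) := by
  induction M generalizing N d x with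
  | var n =>
    simp only [subst, lift]
    split_ifs <;> simp only [subst, lift] <;> split_ifs <;> first | rfl | omega | (congr 1; omega)
  | lam M ih =>
    simp only [subst, lift, ih _ (Nat.succ_le_succ h), lift_lift_of_le N (Nat.zero_le d)]
  | app M P ihM ihP => simp only [subst, lift, ihM N h, ihP N h]

theorem subst_lift (M N : Lam) (x : ℕ) : (M.lift x).subst x N = M := by
  induction M generalizing N x with
  | var n =>
    simp only [lift]
    split_ifs <;> simp only [subst] <;> split_ifs <;> first | rfl | omega
  | lam M ih => simp only [lift, subst, ih]
  | app M P ihM ihP => simp only [lift, subst, ihM, ihP]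

theorem subst_subst_of_le (M P Q : Lam) {i j : ℕ} (h : i ≤ j) :
    (M.subst i P).subst j Q = (M.subst (j + 1) (Q.lift i)).subst i (P.subst j Q) := by
  induction M generalizing P Q i j with
  | var n =>
    simp only [subst]
    split_ifs <;> (try simp only [subst, subst_lift]) <;> (try split_ifs) <;> first | rfl | omega
  | lam M ih =>
    simp only [subst, ih _ _ (Nat.succ_le_succ h), lift_lift_of_le Q (Nat.zero_le i),
      lift_subst_of_le P Q (Nat.zero_le j)]
  | app M R ihM ihR => simp only [subst, ihM P Q h, ihR P Q h]

/-- Parallel reduction: contract any set of redexes of a term simultaneously. -/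
inductive Par : Lam → Lam → Prop
  | var (n : ℕ) : Par (var n) (var n)
  | lam {M M' : Lam} : Par M M' → Par (lam M) (lam M')
  | app {M M' N N' : Lam} : Par M M' → Par N N' → Par (app M N) (app M' N')
  | beta {M M' N N' : Lam} : Par M M' → Par N N' → Par (app (lam M) N) (M'.subst 0 N')

namespace Par

theorem refl : ∀ M : Lam, Par M M
  | .var n => .var n
  | .lam M => .lam (refl M)
  | .app M N => .app (refl M) (refl N)

theorem lift {M M' : Lam} (h : Par M M') (d : ℕ) : Par (M.lift d) (M'.lift d) := by
  induction h generalizing d with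
  | var n => exact refl _
  | lam _ ih => exact .lam (ih _)
  | app _ _ ihM ihN => exact .app (ihM d) (ihN d)
  | @beta _ M' _ N' _ _ ihM ihN =>
    rw [lift_subst_of_ge M' N' (Nat.zero_le d)]
    exact .beta (ihM _) (ihN d)

theorem subst {M M' N N' : Lam} (hM : Par M M') (hN : Par N N') (x : ℕ) :
    Par (M.subst x N) (M'.subst x N') := by
  induction hM generalizing N N' x with
  | var n => simp only [Lam.subst]; split_ifs <;> first | exact hN | exact refl _
  | lam _ ih => exact .lam (ih (hN.lift 0) _)
  | app _ _ ihM ihP => exact .app (ihM hN x) (ihP hN x)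
  | @beta _ M' _ P' _ _ ihM ihP =>
    rw [subst_subst_of_le M' P' N' (Nat.zero_le x)]
    exact .beta (ihM (hN.lift 0) _) (ihP hN x)

/-- Takahashi's triangle property. -/
theorem to_star {M N : Lam} (h : Par M N) : Par N (star M) := by
  induction h with
  | var n => exact .var n
  | lam _ ih => exact .lam ih
  | @app M _ _ _ hM _ ihM ihN =>
    cases M with
    | var n => cases hM; exact .app ihM ihN
    | lam P =>
      cases hM
      cases ihM with
      | lam hP => exact .beta hP ihN
    | app P Q => exact .app ihM ihN
  | beta _ _ ihM ihN => exact ihM.subst ihN 0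

theorem star {M N : Lam} (h : Par M N) : Par (star M) (star N) :=
  h.to_star.to_star

theorem iterStar {M N : Lam} (h : Par M N) (k : ℕ) : Par (iterStar k M) (iterStar k N) := by
  induction k with
  | zero => exact h
  | succ k ih =>
    simp only [Lam.iterStar, Function.iterate_succ_apply'] at ih ⊢
    exact ih.star

end Par

theorem Step.par {M N : Lam} (h : Step M N) : Par M N := by
  induction h with
  | beta M N => exact .beta (.refl M) (.refl N)
  | appL N _ ih => exact .app ih (.refl N)
  | appR M _ ih => exact .app (.refl M) ih
  | abs _ ih => exact .lam ih

namespace Red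

theorem lam {M N : Lam} (h : Red M N) : Red (lam M) (lam N) :=
  h.lift Lam.lam fun _ _ => Step.abs

theorem app {M M' N N' : Lam} (hM : Red M M') (hN : Red N N') : Red (app M N) (app M' N') :=
  (hM.lift (Lam.app · N) fun _ _ => Step.appL N).trans
    (hN.lift (Lam.app M') fun _ _ => Step.appR M')

end Red

theorem Par.red {M N : Lam} (h : Par M N) : Red M N := by
  induction h with
  | var n => exact .refl
  | lam _ ih => exact ih.lam
  | app _ _ ihM ihN => exact ihM.app ihN
  | beta _ _ ihM ihN => exact (ihM.lam.app ihN).tail (.beta _ _)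

theorem iterStar_add (M : Lam) (i j : ℕ) : iterStar (i + j) M = iterStar j (iterStar i M) := by
  simp only [iterStar, Nat.add_comm i j, Function.iterate_add_apply]

theorem red_iterStar (M : Lam) (k : ℕ) : Red M (iterStar k M) := by
  induction k with
  | zero => exact .refl
  | succ k ih =>
    rw [iterStar_add]
    exact ih.trans (Par.refl _).to_star.red

theorem red_iterStar_of_le (M : Lam) {i j : ℕ} (h : i ≤ j) :
    Red (iterStar i M) (iterStar j M) := by
  obtain ⟨k, rfl⟩ := Nat.exists_eq_add_of_le h
  rw [iterStar_add]
  exact red_iterStar _ k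

theorem exists_red_iterStar_of_red {M N : Lam} (h : Red M N) : ∃ k, Red N (iterStar k M) := by
  induction h using Relation.ReflTransGen.head_induction_on with
  | refl => exact ⟨0, .refl⟩
  | @head M P hMP _ ih =>
    obtain ⟨k, hk⟩ := ih
    refine ⟨1 + k, hk.trans ?_⟩
    rw [iterStar_add]
    exact (hMP.par.to_star.iterStar k).red

theorem red_confluent {M A B : Lam} (hA : Red M A) (hB : Red M B) : Relation.Join Red A B := by
  obtain ⟨i, hi⟩ := exists_red_iterStar_of_red hA
  obtain ⟨j, hj⟩ := exists_red_iterStar_of_red hB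
  exact ⟨iterStar (max i j) M, hi.trans (red_iterStar_of_le M (le_max_left i j)),
    hj.trans (red_iterStar_of_le M (le_max_right i j))⟩

theorem equivalence_join_red : Equivalence (Relation.Join Red) :=
  Relation.equivalence_join (r := Relation.ReflTransGen Step) fun _ _ _ => red_confluent

theorem join_red_of_eqvGen {M N : Lam} (h : Relation.EqvGen Step M N) : Relation.Join Red M N :=
  equivalence_join_red.eqvGen_iff.mp <|
    Relation.EqvGen.mono (fun _ B s => ⟨B, .single s, .refl⟩) M N h

end Lam

/-- Church-Rosser for β-equality: if M =β N then M and N have a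
common reduct of the form N^(l*) -/
theorem church_rosser_eq {M N : Lam} (h : Relation.EqvGen Lam.Step M N) :
    ∃ l : ℕ, Lam.Red M (Lam.iterStar l N) ∧ Lam.Red N (Lam.iterStar l N) := by
  obtain ⟨P, hMP, hNP⟩ := Lam.join_red_of_eqvGen h
  obtain ⟨l, hl⟩ := Lam.exists_red_iterStar_of_red hNP
  exact ⟨l, hMP.trans hl, hNP.trans hl⟩
end

section
/- If M ↠ M* ↠ M^(2*) ↠ ⋯ ↠ M^(n*) with each stage a complete development of at most (1/2)|·|−1 steps, then the total reduction length l from M to M^(n*) is bounded by (1/2)·Σ_{k=0}^{n−1} F(|M|,k) − n, where F(m,0)=m and F(m,k+1)=2^(F(m,k)−1); in particular l < 2_{n−1}^{|M|} (the (n−1)-fold iterated exponential of |M|) for n ≥ 1. -/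
namespace Lam

/-- F(m,0) = m, F(m,k+1) = 2^(F(m,k)−1) -/
def F (m : ℕ) : ℕ → ℕ
  | 0 => m
  | k+1 => 2 ^ (F m k - 1)

/-- iterated exponentials: 2_0^m = m, 2_{n+1}^m = 2^(2_n^m) -/
def twoIter : ℕ → ℕ → ℕ
  | 0, m => m
  | n+1, m => 2 ^ twoIter n m

end Lam

/-!
Substituting a term of size `q` into a term of size `p` yields size at most `p * q`, and by induction
on `M` this gives `2 * |M*| ≤ 2 ^ |M|`. Iterating, `|M^(k*)| ≤ F(|M|, k)`, so the `k`-th development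
has at most `F(|M|, k) / 2 - 1` steps; summing gives the first bound. Since `F(m, k) ≤ 2_k^m` and
`2x ≤ 2^x + 2`, the sum `Σ_{k ≤ j} F(m, k)` is at most `2 · 2_j^m + 2j`, which gives the second.
-/

namespace Lam

theorem one_le_size (M : Lam) : 1 ≤ M.size := by
  cases M <;> simp only [size] <;> omega

theorem two_le_two_pow_size (M : Lam) : 2 ≤ 2 ^ M.size :=
  Nat.pow_le_pow_right two_pos (one_le_size M)

@[simp]
theorem size_lift (M : Lam) (d : ℕ) : (M.lift d).size = M.size := by
  induction M generalizing d with
  | var n => simp only [lift]; split <;> rfl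
  | lam M ih => simp [lift, size, ih]
  | app M N ihM ihN => simp [lift, size, ihM, ihN]

theorem size_subst_le (M : Lam) (x : ℕ) (N : Lam) : (M.subst x N).size ≤ M.size * N.size := by
  have hN := one_le_size N
  induction M generalizing x N with
  | var n => simp only [subst, size]; split_ifs <;> simp [size, hN]
  | lam M ih =>
    have := ih (x + 1) (N.lift 0) (by simpa using hN)
    simp only [subst, size, size_lift] at this ⊢
    nlinarith
  | app M P ihM ihP =>
    have := ihM x N hN
    have := ihP x N hN
    simp only [subst, size]
    nlinarith

theorem two_mul_size_star_le (M : Lam) : 2 * M.star.size ≤ 2 ^ M.size := by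
  induction M with
  | var n => simp [star, size]
  | lam M ih =>
    have := two_le_two_pow_size M
    simp only [star, size, pow_add]
    omega
  | app P N ihP ihN =>
    have hN := two_le_two_pow_size N
    cases P with
    | var n =>
      simp only [star, size, pow_add]
      omega
    | lam Q =>
      have hsubst := size_subst_le Q.star 0 N.star
      simp only [star, size, pow_add] at ihP ⊢
      nlinarith
    | app A B =>
      have hAB : 2 ^ 3 ≤ 2 ^ (app A B).size :=
        Nat.pow_le_pow_right two_pos (by simp only [size]; linarith [one_le_size A, one_le_size B])
      simp only [star] at ihP ⊢
      simp only [size, pow_add] at ihP hAB ⊢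
      nlinarith

theorem iterStar_succ (k : ℕ) (M : Lam) : iterStar (k + 1) M = (iterStar k M).star :=
  Function.iterate_succ_apply' star k M

theorem size_iterStar_le_F (M : Lam) (k : ℕ) : (iterStar k M).size ≤ F M.size k := by
  induction k with
  | zero => rfl
  | succ k ih =>
    have hF := (one_le_size _).trans ih
    have hstar := two_mul_size_star_le (iterStar k M)
    have hpow : 2 ^ (iterStar k M).size ≤ 2 ^ F M.size k := Nat.pow_le_pow_right two_pos ih
    rw [← Nat.sub_add_cancel hF, pow_succ] at hpow
    rw [iterStar_succ, F]
    omega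

theorem F_le_twoIter (m k : ℕ) : F m k ≤ twoIter k m := by
  induction k with
  | zero => rfl
  | succ k ih => exact Nat.pow_le_pow_right two_pos (by omega)

theorem two_mul_le_two_pow_add_two (x : ℕ) : 2 * x ≤ 2 ^ x + 2 := by
  cases x with
  | zero => simp
  | succ x =>
    have := Nat.lt_two_pow_self (n := x)
    rw [pow_succ]
    omega

theorem sum_F_le (m j : ℕ) : ∑ k ∈ Finset.range (j + 1), F m k ≤ 2 * twoIter j m + 2 * j := by
  induction j with
  | zero => simp [F, twoIter, two_mul]
  | succ j ih =>
    have hnew : F m (j + 1) ≤ 2 ^ twoIter j m := F_le_twoIter m (j + 1)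
    have hexp := two_mul_le_two_pow_add_two (twoIter j m)
    rw [Finset.sum_range_succ, twoIter]
    omega

end Lam

theorem length_to_iterStar_general (M : Lam) (n : ℕ) (ls : ℕ → ℕ)
    (hbound : ∀ k < n, (ls k : ℚ) ≤ ((Lam.iterStar k M).size : ℚ) / 2 - 1) :
    ((∑ k ∈ Finset.range n, ls k : ℕ) : ℚ) ≤
        (1/2) * (∑ k ∈ Finset.range n, (Lam.F M.size k : ℚ)) - n ∧
      (1 ≤ n → ((∑ k ∈ Finset.range n, ls k : ℕ) : ℚ) < Lam.twoIter (n-1) M.size) := by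
  have hstage : ∀ k ∈ Finset.range n, (ls k : ℚ) ≤ (Lam.F M.size k : ℚ) / 2 - 1 := fun k hk => by
    have : ((Lam.iterStar k M).size : ℚ) ≤ Lam.F M.size k := by
      exact_mod_cast Lam.size_iterStar_le_F M k
    linarith [hbound k (Finset.mem_range.mp hk)]
  have htotal : ((∑ k ∈ Finset.range n, ls k : ℕ) : ℚ) ≤
      (1/2) * (∑ k ∈ Finset.range n, (Lam.F M.size k : ℚ)) - n := by
    calc ((∑ k ∈ Finset.range n, ls k : ℕ) : ℚ)
        ≤ ∑ k ∈ Finset.range n, ((Lam.F M.size k : ℚ) / 2 - 1) := by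
          push_cast; exact Finset.sum_le_sum hstage
      _ = (1/2) * (∑ k ∈ Finset.range n, (Lam.F M.size k : ℚ)) - n := by
          rw [Finset.sum_sub_distrib, ← Finset.sum_div, Finset.sum_const, Finset.card_range,
            nsmul_eq_mul, mul_one]
          ring
  refine ⟨htotal, fun hn => ?_⟩
  obtain ⟨j, rfl⟩ : ∃ j, n = j + 1 := ⟨n - 1, by omega⟩
  have hsum : (∑ k ∈ Finset.range (j + 1), (Lam.F M.size k : ℚ)) ≤
      2 * (Lam.twoIter j M.size : ℚ) + 2 * j := by
    exact_mod_cast Lam.sum_F_le M.size j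
  rw [Nat.add_sub_cancel]
  push_cast at htotal ⊢
  linarith

/-- total reduction length from M to M^(n*) -/
theorem length_to_iterStar (M : Lam) (n : ℕ) (ls : ℕ → ℕ)
    (hsteps : ∀ k < n, Lam.Steps (ls k) (Lam.iterStar k M) (Lam.iterStar (k+1) M))
    (hbound : ∀ k < n, (ls k : ℚ) ≤ ((Lam.iterStar k M).size : ℚ) / 2 - 1) :
    ((∑ k ∈ Finset.range n, ls k : ℕ) : ℚ) ≤
        (1/2) * (∑ k ∈ Finset.range n, (Lam.F M.size k : ℚ)) - n ∧
      (1 ≤ n → ((∑ k ∈ Finset.range n, ls k : ℕ) : ℚ) < Lam.twoIter (n-1) M.size) :=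
  length_to_iterStar_general M n ls hbound
end
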